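/- Let γ : [0,1] → ℝ² be a C¹ simple closed curve with nowhere-vanishing tangent, and let θ(t) denote a continuous determination of the angle between dγ/dt and the positive x-axis. Then the total variation ∫₀¹ θ′(t) dt equals ±2π (equal to 2π for positively oriented curves). -/

import Mathlib

/-!
Hopf's proof. After a shift of the parameter the curve starts at a lowest point. On the triangle
`0 ≤ s ≤ t ≤ 1` the direction of the chord from `Γ s` to `Γ t`, extended by the tangent direction
on the diagonal and by minus the initial tangent at the corner `(0, 1)`, is continuous, and it does
not vanish because the curve is simple. The triangle is convex, so this secant map has a
continuous argument `Φ`. From `(0, 0)` to `(1, 1)`, `Φ` changes along the diagonal by the total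
turning of the tangent; along the two other sides it changes twice by the same amount, since the
chords from `Γ t` to `Γ 1 = Γ 0` are opposite to those from `Γ 0` to `Γ t`. These all point
into the upper half-plane, and the chord direction at `(0, 1)` is opposite to that at `(0, 0)`,
so that amount is `±π`.
-/

open Complex Set Filter Topology
open scoped Real

theorem exists_int_sub_eq_of_exp_mul_I_eq {a b : ℝ} (h : exp (a * I) = exp (b * I)) :
    ∃ n : ℤ, a - b = n * (2 * π) := by
  obtain ⟨n, hn⟩ := exp_eq_exp_iff_exists_int.mp h
  exact ⟨n, by simpa [sub_eq_iff_eq_add, add_comm] using congrArg im hn⟩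

theorem IsPreconnected.sub_eq_sub_of_exp_mul_I_eq {X : Type*} [TopologicalSpace X] {s : Set X}
    (hs : IsPreconnected s) {θ₁ θ₂ : X → ℝ} (h₁ : ContinuousOn θ₁ s) (h₂ : ContinuousOn θ₂ s)
    (h : ∀ x ∈ s, exp (θ₁ x * I) = exp (θ₂ x * I)) {x y : X} (hx : x ∈ s) (hy : y ∈ s) :
    θ₁ x - θ₂ x = θ₁ y - θ₂ y :=
  hs.constant_of_mapsTo (T := AddSubgroup.zmultiples (2 * π))
    (isDiscrete_iff_discreteTopology.mpr
      (inferInstanceAs (DiscreteTopology (AddSubgroup.zmultiples (2 * π))))) (h₁.sub h₂)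
    (fun z hz => by
      obtain ⟨n, hn⟩ := exists_int_sub_eq_of_exp_mul_I_eq (h z hz)
      exact ⟨n, by simp [hn]⟩) hx hy

theorem Convex.exists_continuousOn_exp_eq {E : Type*} [NormedAddCommGroup E] [NormedSpace ℝ E]
    {s : Set E} (hs : Convex ℝ s) {f : E → ℂ} (hf : ContinuousOn f s) (h0 : ∀ x ∈ s, f x ≠ 0) :
    ∃ L : E → ℂ, ContinuousOn L s ∧ ∀ x ∈ s, exp (L x) = f x := by
  rcases s.eq_empty_or_nonempty with rfl | ⟨x₀, hx₀⟩
  · exact ⟨0, continuousOn_empty _, fun _ h => h.elim⟩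
  have := hs.contractibleSpace ⟨x₀, hx₀⟩
  have := hs.locallyPathConnectedSpace
  obtain ⟨L, ⟨-, hL⟩, -⟩ := isCoveringMapOn_exp.existsUnique_continuousMap_lifts
    ⟨s.domRestrict f, hf.domRestrict⟩ (a₀ := ⟨x₀, hx₀⟩) (e₀ := log (f x₀))
    (exp_log (h0 x₀ hx₀)) (fun x => h0 x x.2)
  classical
  refine ⟨fun x => if hx : x ∈ s then L ⟨x, hx⟩ else 0, ?_, fun x hx => ?_⟩
  · rw [continuousOn_iff_continuous_domRestrict]
    convert L.continuous with x
    simp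
  · simpa [hx] using congrFun hL ⟨x, hx⟩

theorem Convex.exists_continuousOn_arg {E : Type*} [NormedAddCommGroup E] [NormedSpace ℝ E]
    {s : Set E} (hs : Convex ℝ s) {f : E → ℂ} (hf : ContinuousOn f s) (h0 : ∀ x ∈ s, f x ≠ 0) :
    ∃ θ : E → ℝ, ContinuousOn θ s ∧ ∀ x ∈ s, exp (θ x * I) = NormedSpace.normalize (f x) := by
  obtain ⟨L, hL, hLf⟩ := hs.exists_continuousOn_exp_eq hf h0
  refine ⟨fun x => (L x).im, continuous_im.comp_continuousOn hL, fun x hx => ?_⟩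
  rw [← hLf x hx, NormedSpace.normalize, norm_exp, Complex.real_smul, ← Complex.re_add_im (L x),
    exp_add, ← ofReal_exp]
  simp

theorem normalize_eq_exp_mul_I {z : ℂ} {a : ℝ} (hz : z ≠ 0) (h : z = ‖z‖ * exp (a * I)) :
    NormedSpace.normalize z = exp (a * I) := by
  rw [NormedSpace.normalize, Complex.real_smul]
  nth_rw 2 [h]
  rw [← mul_assoc, ← ofReal_mul, inv_mul_cancel₀ (norm_ne_zero_iff.mpr hz), ofReal_one, one_mul]

theorem continuousAt_normalize {V : Type*} [NormedAddCommGroup V] [NormedSpace ℝ V] {x : V}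
    (hx : x ≠ 0) : ContinuousAt NormedSpace.normalize x :=
  (continuous_norm.continuousAt.inv₀ (norm_ne_zero_iff.mpr hx)).smul continuousAt_id

theorem Filter.Tendsto.inv_add_smul_smul_add_smul {α E : Type*} [NormedAddCommGroup E]
    [NormedSpace ℝ E] {l : Filter α} {a b : α → ℝ} {A B : α → E} {L : E}
    (hA : Tendsto A l (𝓝 L)) (hB : Tendsto B l (𝓝 L))
    (hab : ∀ᶠ x in l, 0 ≤ a x ∧ 0 ≤ b x ∧ 0 < a x + b x) :
    Tendsto (fun x => (a x + b x)⁻¹ • (a x • A x + b x • B x)) l (𝓝 L) := by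
  refine Metric.nhds_basis_ball.tendsto_right_iff.mpr fun ε hε => ?_
  filter_upwards [hA (Metric.ball_mem_nhds L hε), hB (Metric.ball_mem_nhds L hε), hab]
    with x hAx hBx ⟨ha, hb, hpos⟩
  convert convex_ball L ε hAx hBx (div_nonneg ha hpos.le) (div_nonneg hb hpos.le)
    (by field_simp) using 1
  simp only [smul_add, smul_smul, div_eq_inv_mul]

theorem exists_mem_Icc_sin_eq_neg_one {a b : ℝ} (h : a + 2 * π ≤ b) :
    ∃ z ∈ Icc a b, Real.sin z = -1 := by
  refine ⟨toIcoMod Real.two_pi_pos a (-(π / 2)), ?_, ?_⟩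
  · have := toIcoMod_mem_Ico Real.two_pi_pos a (-(π / 2))
    exact ⟨this.1, by linarith [this.2]⟩
  · rw [toIcoMod, zsmul_eq_mul, Real.sin_sub_int_mul_two_pi, Real.sin_neg, Real.sin_pi_div_two]

theorem abs_sub_lt_two_pi_of_sin_nonneg {φ : ℝ → ℝ} {a b : ℝ} (hφ : ContinuousOn φ (uIcc a b))
    (hsin : ∀ t ∈ uIcc a b, 0 ≤ Real.sin (φ t)) : |φ b - φ a| < 2 * π := by
  by_contra! hle
  obtain ⟨z, hz, hsz⟩ := exists_mem_Icc_sin_eq_neg_one (a := min (φ a) (φ b)) (b := max (φ a) (φ b))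
    (by linarith [max_sub_min_eq_abs (φ a) (φ b), abs_sub_comm (φ a) (φ b)])
  obtain ⟨t, ht, rfl⟩ := intermediate_value_uIcc hφ hz
  linarith [hsin t ht]

theorem sub_eq_pi_or_sub_eq_neg_pi_of_sin_nonneg {φ : ℝ → ℝ} {a b : ℝ}
    (hφ : ContinuousOn φ (uIcc a b)) (hsin : ∀ t ∈ uIcc a b, 0 ≤ Real.sin (φ t))
    (hopp : exp (φ b * I) = -exp (φ a * I)) : φ b - φ a = π ∨ φ b - φ a = -π := by
  have hopp' : exp (φ b * I) = exp (((φ a + π : ℝ) : ℂ) * I) := by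
    rw [hopp, ofReal_add, add_mul, exp_add, exp_pi_mul_I, mul_neg_one]
  obtain ⟨n, hn⟩ := exists_int_sub_eq_of_exp_mul_I_eq hopp'
  have hlt := abs_lt.mp (abs_sub_lt_two_pi_of_sin_nonneg hφ hsin)
  have hπ := Real.pi_pos
  have hn₁ : (n : ℝ) < 1 := by nlinarith
  have hn₂ : (-2 : ℝ) < n := by nlinarith
  have : n = 0 ∨ n = -1 := by
    have : n < 1 := by exact_mod_cast hn₁
    have : -2 < n := by exact_mod_cast hn₂
    omega
  rcases this with rfl | rfl
  · exact .inl (by push_cast at hn; linarith)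
  · exact .inr (by push_cast at hn; linarith)

section SegmentAverage

variable {E : Type*} [NormedAddCommGroup E] [NormedSpace ℝ E]

noncomputable def segmentAverage (f : ℝ → E) (s t : ℝ) : E := ∫ r in (0 : ℝ)..1, f (s + r * (t - s))

theorem segmentAverage_self [CompleteSpace E] (f : ℝ → E) (t : ℝ) : segmentAverage f t t = f t := by
  simp [segmentAverage, intervalIntegral.integral_const]

theorem sub_smul_segmentAverage (f : ℝ → E) (s t : ℝ) :
    (t - s) • segmentAverage f s t = ∫ u in s..t, f u := by
  have := intervalIntegral.smul_integral_comp_mul_add f (t - s) s (a := 0) (b := 1)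
  simp only [mul_zero, zero_add, mul_one, sub_add_cancel] at this
  simpa [segmentAverage, mul_comm, add_comm] using this

theorem continuous_segmentAverage {f : ℝ → E} (hf : Continuous f) :
    Continuous fun p : ℝ × ℝ => segmentAverage f p.1 p.2 :=
  intervalIntegral.continuous_parametric_intervalIntegral_of_continuous (by fun_prop)
    continuous_const

end SegmentAverage

def hopfTriangle : Set (ℝ × ℝ) := {p | 0 ≤ p.1 ∧ p.1 ≤ p.2 ∧ p.2 ≤ 1}

theorem convex_hopfTriangle : Convex ℝ hopfTriangle := by
  intro p hp q hq a b ha hb hab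
  simp only [hopfTriangle, mem_ofPred_eq, Prod.fst_add, Prod.snd_add, Prod.smul_fst,
    Prod.smul_snd, smul_eq_mul] at *
  refine ⟨by nlinarith, by nlinarith, by nlinarith⟩

theorem add_one_sub_pos_of_mem_hopfTriangle {p : ℝ × ℝ} (hp : p ∈ hopfTriangle)
    (hp₀₁ : p ≠ (0, 1)) : 0 < p.1 + (1 - p.2) := by
  obtain ⟨hs, -, ht⟩ := hp
  by_contra! h
  exact hp₀₁ (Prod.ext (by dsimp; linarith) (by dsimp; linarith))

noncomputable def secantDir (dΓ : ℝ → ℂ) (p : ℝ × ℝ) : ℂ :=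
  NormedSpace.normalize (if p = (0, 1) then -dΓ 0 else segmentAverage dΓ p.1 p.2)

section SecantMap

variable {Γ dΓ : ℝ → ℂ}

theorem segmentAverage_ne_zero_of_mem_hopfTriangle
    (hG : ∀ s t, (t - s) • segmentAverage dΓ s t = Γ t - Γ s) (hΓ : Γ 0 = Γ 1)
    (hreg : ∀ t ∈ Icc (0 : ℝ) 1, dΓ t ≠ 0) (hinj : InjOn Γ (Ico 0 1))
    {p : ℝ × ℝ} (hp : p ∈ hopfTriangle) (hp₀₁ : p ≠ (0, 1)) :
    segmentAverage dΓ p.1 p.2 ≠ 0 := by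
  obtain ⟨s, t⟩ := p
  obtain ⟨hs, hst, ht⟩ : 0 ≤ s ∧ s ≤ t ∧ t ≤ 1 := hp
  rcases hst.eq_or_lt with rfl | hst
  · rw [segmentAverage_self]
    exact hreg s ⟨hs, ht⟩
  intro h0
  have hΓst : Γ s = Γ t := by simpa [h0, sub_eq_zero, eq_comm] using hG s t
  have hsIco : s ∈ Ico (0 : ℝ) 1 := ⟨hs, hst.trans_le ht⟩
  rcases ht.eq_or_lt with rfl | ht
  · exact hp₀₁ (by rw [hinj hsIco ⟨le_rfl, one_pos⟩ (hΓst.trans hΓ.symm)])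
  · exact hst.ne (hinj hsIco ⟨hs.trans hst.le, ht⟩ hΓst)

theorem secantDir_zero_one : secantDir dΓ (0, 1) = -NormedSpace.normalize (dΓ 0) := by
  simp [secantDir]

theorem secantDir_eq_neg_normalize (hG : ∀ s t, (t - s) • segmentAverage dΓ s t = Γ t - Γ s)
    (hΓ : Γ 0 = Γ 1) {s t : ℝ} (hp : (s, t) ∈ hopfTriangle) (hp₀₁ : (s, t) ≠ (0, 1))
    (hst : s < t) :
    secantDir dΓ (s, t) = -NormedSpace.normalize ((s + (1 - t))⁻¹ •
      (s • segmentAverage dΓ 0 s + (1 - t) • segmentAverage dΓ t 1)) := by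
  have hpos := add_one_sub_pos_of_mem_hopfTriangle hp hp₀₁
  -- The chord from `Γ s` to `Γ t` is opposite to the path from `Γ t` to `Γ 1 = Γ 0` and on
  -- to `Γ s`.
  have hchord : (t - s) • segmentAverage dΓ s t =
      -(s • segmentAverage dΓ 0 s + (1 - t) • segmentAverage dΓ t 1) := by
    have h₀ := hG 0 s
    rw [sub_zero] at h₀
    rw [h₀, hG, hG, ← hΓ]
    abel
  rw [secantDir, if_neg hp₀₁, ← NormedSpace.normalize_smul_of_pos (sub_pos.mpr hst), hchord,
    NormedSpace.normalize_smul_of_pos (inv_pos.mpr hpos), NormedSpace.normalize_neg]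

theorem continuousWithinAt_secantDir_zero_one (hdΓ : Continuous dΓ)
    (hG : ∀ s t, (t - s) • segmentAverage dΓ s t = Γ t - Γ s) (hΓ : Γ 0 = Γ 1)
    (hdΓ₀₁ : dΓ 0 = dΓ 1) (hd₀ : dΓ 0 ≠ 0) :
    ContinuousWithinAt (secantDir dΓ) hopfTriangle (0, 1) := by
  set G := segmentAverage dΓ
  have hGc := continuous_segmentAverage hdΓ
  rw [← continuousWithinAt_sdiff_self]
  -- `v` is the mean velocity along the path from `Γ t` to `Γ 1 = Γ 0` and on to `Γ s`.
  set v : ℝ × ℝ → ℂ := fun q => (q.1 + (1 - q.2))⁻¹ • (q.1 • G 0 q.1 + (1 - q.2) • G q.2 1)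
  have hv : Tendsto v (𝓝[hopfTriangle \ {(0, 1)}] (0, 1)) (𝓝 (dΓ 0)) := by
    refine Filter.Tendsto.inv_add_smul_smul_add_smul ?_ ?_ ?_
    · have : Tendsto (fun q : ℝ × ℝ => G 0 q.1) (𝓝 (0, 1)) (𝓝 (G 0 0)) :=
        (hGc.comp (continuous_const.prodMk continuous_fst)).tendsto _
      simpa [G, segmentAverage_self] using this.mono_left nhdsWithin_le_nhds
    · have : Tendsto (fun q : ℝ × ℝ => G q.2 1) (𝓝 (0, 1)) (𝓝 (G 1 1)) :=
        (hGc.comp (continuous_snd.prodMk continuous_const)).tendsto _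
      simpa [G, segmentAverage_self, hdΓ₀₁] using this.mono_left nhdsWithin_le_nhds
    · filter_upwards [self_mem_nhdsWithin] with q ⟨hq, hq₀₁⟩
      exact ⟨hq.1, sub_nonneg.mpr hq.2.2, add_one_sub_pos_of_mem_hopfTriangle hq hq₀₁⟩
  have hnear : ∀ᶠ q : ℝ × ℝ in 𝓝 (0, 1), q.1 < q.2 :=
    (continuous_fst.tendsto _).eventually_lt (continuous_snd.tendsto _) (by norm_num)
  have hdir : (fun q => -NormedSpace.normalize (v q)) =ᶠ[𝓝[hopfTriangle \ {(0, 1)}] (0, 1)]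
      secantDir dΓ := by
    filter_upwards [self_mem_nhdsWithin, nhdsWithin_le_nhds hnear] with ⟨s, t⟩ ⟨hq, hq₀₁⟩ hst
    exact (secantDir_eq_neg_normalize hG hΓ hq hq₀₁ hst).symm
  rw [ContinuousWithinAt, secantDir_zero_one]
  exact ((continuousAt_normalize hd₀).tendsto.comp hv).neg.congr' hdir

theorem continuousOn_secantDir (hdΓ : Continuous dΓ)
    (hG : ∀ s t, (t - s) • segmentAverage dΓ s t = Γ t - Γ s) (hΓ : Γ 0 = Γ 1)
    (hdΓ₀₁ : dΓ 0 = dΓ 1) (hreg : ∀ t ∈ Icc (0 : ℝ) 1, dΓ t ≠ 0) (hinj : InjOn Γ (Ico 0 1)) :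
    ContinuousOn (secantDir dΓ) hopfTriangle := by
  intro p hp
  by_cases hp₀₁ : p = (0, 1)
  · subst hp₀₁
    exact continuousWithinAt_secantDir_zero_one hdΓ hG hΓ hdΓ₀₁ (hreg 0 ⟨le_rfl, zero_le_one⟩)
  refine ContinuousAt.continuousWithinAt ?_
  have hGp := segmentAverage_ne_zero_of_mem_hopfTriangle hG hΓ hreg hinj hp hp₀₁
  refine ((continuousAt_normalize hGp).comp (f := fun q : ℝ × ℝ => segmentAverage dΓ q.1 q.2)
    (continuous_segmentAverage hdΓ).continuousAt).congr ?_
  filter_upwards [isOpen_ne.mem_nhds hp₀₁] with q hq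
  simp [secantDir, hq]

theorem secantDir_ne_zero (hG : ∀ s t, (t - s) • segmentAverage dΓ s t = Γ t - Γ s)
    (hΓ : Γ 0 = Γ 1) (hreg : ∀ t ∈ Icc (0 : ℝ) 1, dΓ t ≠ 0) (hinj : InjOn Γ (Ico 0 1))
    {p : ℝ × ℝ} (hp : p ∈ hopfTriangle) : secantDir dΓ p ≠ 0 := by
  rw [secantDir, Ne, NormedSpace.normalize_eq_zero_iff]
  split_ifs with hp₀₁
  · exact neg_ne_zero.mpr (hreg 0 ⟨le_rfl, zero_le_one⟩)
  · exact segmentAverage_ne_zero_of_mem_hopfTriangle hG hΓ hreg hinj hp hp₀₁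

theorem secantDir_diag (t : ℝ) : secantDir dΓ (t, t) = NormedSpace.normalize (dΓ t) := by
  have : (t, t) ≠ ((0 : ℝ), (1 : ℝ)) := by
    rw [Ne, Prod.mk.injEq]
    rintro ⟨rfl, h⟩
    exact zero_ne_one h
  rw [secantDir, if_neg this, segmentAverage_self]

theorem secantDir_mk_one (hG : ∀ s t, (t - s) • segmentAverage dΓ s t = Γ t - Γ s)
    (hΓ : Γ 0 = Γ 1) (hdΓ₀₁ : dΓ 0 = dΓ 1) {t : ℝ} (ht : t ∈ Icc (0 : ℝ) 1) :
    secantDir dΓ (t, 1) = -secantDir dΓ (0, t) := by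
  rcases ht.1.eq_or_lt with rfl | ht₀
  · rw [secantDir_zero_one, secantDir_diag]
  rcases ht.2.eq_or_lt with rfl | ht₁
  · rw [secantDir_diag, secantDir_zero_one, neg_neg, hdΓ₀₁]
  -- The chords from `Γ 0` to `Γ t` and from `Γ t` to `Γ 1 = Γ 0` are opposite.
  have hchord : (1 - t) • segmentAverage dΓ t 1 = -(t • segmentAverage dΓ 0 t) := by
    rw [hG, ← hΓ, ← neg_sub, ← hG, sub_zero]
  have h₁ : (t, (1 : ℝ)) ≠ (0, 1) := by simp [ht₀.ne']
  have h₂ : ((0 : ℝ), t) ≠ (0, 1) := by simp [ht₁.ne]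
  rw [secantDir, secantDir, if_neg h₁, if_neg h₂,
    ← NormedSpace.normalize_smul_of_pos (sub_pos.mpr ht₁), hchord, NormedSpace.normalize_neg,
    NormedSpace.normalize_smul_of_pos ht₀]

theorem im_segmentAverage_zero_nonneg (hdΓ : Continuous dΓ)
    (hG : ∀ s t, (t - s) • segmentAverage dΓ s t = Γ t - Γ s)
    (hmin : ∀ t ∈ Icc (0 : ℝ) 1, (Γ 0).im ≤ (Γ t).im) {t : ℝ} (ht : t ∈ Icc (0 : ℝ) 1) :
    0 ≤ (segmentAverage dΓ 0 t).im := by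
  refine (?_ : Icc (0 : ℝ) 1 ⊆ {t | 0 ≤ (segmentAverage dΓ 0 t).im}) ht
  rw [← closure_Ioc zero_ne_one]
  refine (isClosed_le continuous_const (continuous_im.comp ((continuous_segmentAverage hdΓ).comp
    (continuous_const.prodMk continuous_id)))).closure_subset_iff.mpr fun t ht => ?_
  show 0 ≤ (segmentAverage dΓ 0 t).im
  have := congrArg im (hG 0 t)
  simp only [sub_zero, real_smul, im_ofReal_mul, sub_im] at this
  exact nonneg_of_mul_nonneg_right (by linarith [hmin t (Ioc_subset_Icc_self ht)]) ht.1

theorem im_segmentAverage_one_nonpos (hdΓ : Continuous dΓ)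
    (hG : ∀ s t, (t - s) • segmentAverage dΓ s t = Γ t - Γ s) (hΓ : Γ 0 = Γ 1)
    (hmin : ∀ t ∈ Icc (0 : ℝ) 1, (Γ 0).im ≤ (Γ t).im) {t : ℝ} (ht : t ∈ Icc (0 : ℝ) 1) :
    (segmentAverage dΓ t 1).im ≤ 0 := by
  refine (?_ : Icc (0 : ℝ) 1 ⊆ {t | (segmentAverage dΓ t 1).im ≤ 0}) ht
  rw [← closure_Ico zero_ne_one]
  refine (isClosed_le (continuous_im.comp ((continuous_segmentAverage hdΓ).comp
    (continuous_id.prodMk continuous_const))) continuous_const).closure_subset_iff.mpr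
    fun t ht => ?_
  show (segmentAverage dΓ t 1).im ≤ 0
  have := congrArg im (hG t 1)
  simp only [real_smul, im_ofReal_mul, sub_im, ← hΓ] at this
  exact nonpos_of_mul_nonpos_right (by linarith [hmin t (Ico_subset_Icc_self ht)])
    (sub_pos.mpr ht.2)

theorem im_secantDir_zero_mk_nonneg (hdΓ : Continuous dΓ)
    (hG : ∀ s t, (t - s) • segmentAverage dΓ s t = Γ t - Γ s) (hΓ : Γ 0 = Γ 1)
    (hdΓ₀₁ : dΓ 0 = dΓ 1) (hmin : ∀ t ∈ Icc (0 : ℝ) 1, (Γ 0).im ≤ (Γ t).im) {t : ℝ}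
    (ht : t ∈ Icc (0 : ℝ) 1) : 0 ≤ (secantDir dΓ (0, t)).im := by
  -- `Γ 0` is a lowest point, so the tangent there is horizontal.
  have him₀ : (dΓ 0).im = 0 := by
    have h₀ := im_segmentAverage_zero_nonneg hdΓ hG hmin (left_mem_Icc.mpr zero_le_one)
    have h₁ := im_segmentAverage_one_nonpos hdΓ hG hΓ hmin (right_mem_Icc.mpr zero_le_one)
    rw [segmentAverage_self] at h₀ h₁
    rw [← hdΓ₀₁] at h₁
    exact le_antisymm h₁ h₀
  rcases ht.2.eq_or_lt with rfl | ht₁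
  · simp [secantDir_zero_one, NormedSpace.normalize, him₀]
  · have h₂ : ((0 : ℝ), t) ≠ (0, 1) := by simp [ht₁.ne]
    rw [secantDir, if_neg h₂, NormedSpace.normalize, smul_im, smul_eq_mul]
    exact mul_nonneg (inv_nonneg.mpr (norm_nonneg _)) (im_segmentAverage_zero_nonneg hdΓ hG hmin ht)

theorem exists_continuousOn_arg_secantDir (hdΓ : Continuous dΓ)
    (hG : ∀ s t, (t - s) • segmentAverage dΓ s t = Γ t - Γ s) (hΓ : Γ 0 = Γ 1)
    (hdΓ₀₁ : dΓ 0 = dΓ 1) (hreg : ∀ t ∈ Icc (0 : ℝ) 1, dΓ t ≠ 0) (hinj : InjOn Γ (Ico 0 1)) :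
    ∃ Φ : ℝ × ℝ → ℝ, ContinuousOn Φ hopfTriangle ∧
      ∀ p ∈ hopfTriangle, exp (Φ p * I) = secantDir dΓ p := by
  obtain ⟨Φ, hΦ, hΦS⟩ := convex_hopfTriangle.exists_continuousOn_arg
    (continuousOn_secantDir hdΓ hG hΓ hdΓ₀₁ hreg hinj)
    fun p hp => secantDir_ne_zero hG hΓ hreg hinj hp
  refine ⟨Φ, hΦ, fun p hp => ?_⟩
  rw [hΦS p hp, secantDir, NormedSpace.normalize_normalize]

end SecantMap

theorem turning_tangents_of_forall_im_le {Γ dΓ : ℝ → ℂ} {Θ : ℝ → ℝ} (hdΓ : Continuous dΓ)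
    (hFTC : ∀ s t, ∫ u in s..t, dΓ u = Γ t - Γ s) (hΓ : Γ 0 = Γ 1) (hdΓ₀₁ : dΓ 0 = dΓ 1)
    (hreg : ∀ t ∈ Icc (0 : ℝ) 1, dΓ t ≠ 0) (hinj : InjOn Γ (Ico 0 1))
    (hΘ : ContinuousOn Θ (Icc 0 1))
    (hlift : ∀ t ∈ Icc (0 : ℝ) 1, exp (Θ t * I) = NormedSpace.normalize (dΓ t))
    (hmin : ∀ t ∈ Icc (0 : ℝ) 1, (Γ 0).im ≤ (Γ t).im) :
    Θ 1 - Θ 0 = 2 * π ∨ Θ 1 - Θ 0 = -(2 * π) := by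
  have hG s t : (t - s) • segmentAverage dΓ s t = Γ t - Γ s := by
    rw [sub_smul_segmentAverage, hFTC]
  obtain ⟨Φ, hΦ, hexpΦ⟩ := exists_continuousOn_arg_secantDir hdΓ hG hΓ hdΓ₀₁ hreg hinj
  have h01 : (0 : ℝ) ∈ Icc (0 : ℝ) 1 := left_mem_Icc.mpr zero_le_one
  have h11 : (1 : ℝ) ∈ Icc (0 : ℝ) 1 := right_mem_Icc.mpr zero_le_one
  have hδ : ContinuousOn (fun t => Φ (t, t)) (Icc 0 1) :=
    hΦ.comp (by fun_prop : Continuous fun t : ℝ => (t, t)).continuousOn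
      fun t ht => ⟨ht.1, le_rfl, ht.2⟩
  have hφ : ContinuousOn (fun t => Φ (0, t)) (Icc 0 1) :=
    hΦ.comp (by fun_prop : Continuous fun t : ℝ => ((0 : ℝ), t)).continuousOn
      fun t ht => ⟨le_rfl, ht.1, ht.2⟩
  have hψ : ContinuousOn (fun t => Φ (t, 1)) (Icc 0 1) :=
    hΦ.comp (by fun_prop : Continuous fun t : ℝ => (t, (1 : ℝ))).continuousOn
      fun t ht => ⟨ht.1, ht.2, le_rfl⟩
  have hdiag := isPreconnected_Icc.sub_eq_sub_of_exp_mul_I_eq hΘ hδ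
    (fun t ht => by rw [hlift t ht, hexpΦ _ ⟨ht.1, le_rfl, ht.2⟩, secantDir_diag]) h11 h01
  have htop := isPreconnected_Icc.sub_eq_sub_of_exp_mul_I_eq (θ₂ := fun t => Φ (0, t) + π) hψ
    (hφ.add continuousOn_const)
    (fun t ht => by
      rw [ofReal_add, add_mul, exp_add, exp_pi_mul_I, mul_neg_one, hexpΦ _ ⟨ht.1, ht.2, le_rfl⟩,
        hexpΦ _ ⟨le_rfl, ht.1, ht.2⟩, secantDir_mk_one hG hΓ hdΓ₀₁ ht])
    h11 h01
  have hleft := sub_eq_pi_or_sub_eq_neg_pi_of_sin_nonneg (φ := fun t => Φ (0, t)) (a := 0) (b := 1)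
    (by rwa [uIcc_of_le zero_le_one])
    (fun t ht => by
      rw [uIcc_of_le zero_le_one] at ht
      rw [← exp_ofReal_mul_I_im, hexpΦ _ ⟨le_rfl, ht.1, ht.2⟩]
      exact im_secantDir_zero_mk_nonneg hdΓ hG hΓ hdΓ₀₁ hmin ht)
    (by
      rw [hexpΦ _ ⟨le_rfl, zero_le_one, le_rfl⟩, hexpΦ _ ⟨le_rfl, le_rfl, zero_le_one⟩,
        ← secantDir_mk_one hG hΓ hdΓ₀₁ h01])
  rcases hleft with h | h
  · exact .inl (by linarith)
  · exact .inr (by linarith)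

section Periodization

open Int (fract)

theorem hasDerivAt_comp_fract {E : Type*} [NormedAddCommGroup E] [NormedSpace ℝ E] {f f' : ℝ → E}
    (hf : ∀ t ∈ Ioo (0 : ℝ) 1, HasDerivAt f (f' t) t) {x : ℝ} (hx : x ∉ range ((↑) : ℤ → ℝ)) :
    HasDerivAt (fun t => f (fract t)) (f' (fract x)) x := by
  have hx' : x ∈ Ioo (⌊x⌋ : ℝ) (⌊x⌋ + 1) :=
    ⟨(Int.floor_le x).lt_of_ne fun h => hx ⟨_, h⟩, Int.lt_floor_add_one x⟩
  have hfract : fract x ∈ Ioo (0 : ℝ) 1 :=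
    ⟨by linarith [hx'.1, Int.self_sub_floor x], Int.fract_lt_one x⟩
  refine ((hf _ hfract).comp_sub_const x ⌊x⌋).congr_of_eventuallyEq ?_
  filter_upwards [isOpen_Ioo.mem_nhds hx'] with y hy
  rw [Int.fract, Int.floor_eq_iff.mpr ⟨hy.1.le, hy.2⟩]

theorem integral_comp_fract {E : Type*} [NormedAddCommGroup E] [NormedSpace ℝ E] [CompleteSpace E]
    {f f' : ℝ → E} (hf : ContinuousOn f (Icc 0 1)) (hf₀₁ : f 0 = f 1)
    (hderiv : ∀ t ∈ Ioo (0 : ℝ) 1, HasDerivAt f (f' t) t) (hf' : Continuous fun t => f' (fract t))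
    (a b : ℝ) : ∫ u in a..b, f' (fract u) = f (fract b) - f (fract a) :=
  MeasureTheory.integral_eq_of_hasDerivAt_off_countable _ _ (countable_range _)
    (hf.comp_fract'' hf₀₁).continuousOn (fun _ hx => hasDerivAt_comp_fract hderiv hx.2)
    (hf'.intervalIntegrable a b)

theorem Set.InjOn.comp_fract_add {α : Type*} {f : ℝ → α} (hf : InjOn f (Ico 0 1)) (a : ℝ) :
    InjOn (fun t => f (fract (t + a))) (Ico 0 1) := by
  intro x hx y hy hxy
  have hmem : ∀ t, fract t ∈ Ico (0 : ℝ) 1 := fun t => ⟨Int.fract_nonneg t, Int.fract_lt_one t⟩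
  obtain ⟨n, hn⟩ := Int.fract_eq_fract.mp (hf (hmem _) (hmem _) hxy)
  have hn₀ : (n : ℝ) = 0 := by
    have : |(n : ℝ)| < 1 := abs_lt.mpr ⟨by linarith [hx.1, hy.2], by linarith [hx.2, hy.1]⟩
    exact_mod_cast Int.abs_lt_one_iff.mp (by exact_mod_cast this)
  linarith

noncomputable def extendAngle (θ : ℝ → ℝ) (t : ℝ) : ℝ := θ (fract t) + (θ 1 - θ 0) * ⌊t⌋

theorem continuous_extendAngle {θ : ℝ → ℝ} (hθ : ContinuousOn θ (Icc 0 1)) :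
    Continuous (extendAngle θ) := by
  have h : ContinuousOn (fun u => θ u - (θ 1 - θ 0) * u) (Icc 0 1) := by fun_prop
  convert (h.comp_fract'' (by ring)).add (continuous_const_mul (θ 1 - θ 0)) using 1
  ext t
  simp only [extendAngle, Function.comp, Pi.add_apply, Int.fract]
  ring

theorem extendAngle_add_one (θ : ℝ → ℝ) (t : ℝ) :
    extendAngle θ (t + 1) = extendAngle θ t + (θ 1 - θ 0) := by
  simp only [extendAngle, Int.fract_add_one, Int.floor_add_one, Int.cast_add, Int.cast_one]
  ring

theorem exp_extendAngle_mul_I {θ : ℝ → ℝ} (h : exp (θ 1 * I) = exp (θ 0 * I)) (t : ℝ) :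
    exp (extendAngle θ t * I) = exp (θ (fract t) * I) := by
  obtain ⟨n, hn⟩ := exists_int_sub_eq_of_exp_mul_I_eq h
  refine exp_eq_exp_iff_exists_int.mpr ⟨n * ⌊t⌋, ?_⟩
  rw [extendAngle, hn]
  push_cast
  ring

end Periodization

/-- Theorem of turning tangents (Umlaufsatz): for a `C¹` simple closed plane curve
`γ : [0,1] → ℝ² ≃ ℂ` with nowhere-vanishing tangent, a continuous determination
`θ` of the angle of the tangent with the positive x-axis satisfies
`∫₀¹ θ′ = θ(1) − θ(0) = ±2π`. -/
theorem turning_tangents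
    (γ dγ : ℝ → ℂ) (θ : ℝ → ℝ)
    (hderiv : ∀ t, HasDerivAt γ (dγ t) t)
    (hC1 : Continuous dγ)
    (hclosed : γ 0 = γ 1) (hclosed' : dγ 0 = dγ 1)
    (hreg : ∀ t ∈ Icc (0 : ℝ) 1, dγ t ≠ 0)
    (hsimple : InjOn γ (Ico (0 : ℝ) 1))
    (hθcont : ContinuousOn θ (Icc (0 : ℝ) 1))
    (hθ : ∀ t ∈ Icc (0 : ℝ) 1,
      dγ t = (‖dγ t‖ : ℂ) * Complex.exp ((θ t : ℂ) * Complex.I)) :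
    θ 1 - θ 0 = 2 * Real.pi ∨ θ 1 - θ 0 = -(2 * Real.pi) := by
  have hfract t : Int.fract t ∈ Icc (0 : ℝ) 1 := ⟨Int.fract_nonneg t, (Int.fract_lt_one t).le⟩
  have hγ : ContinuousOn γ (Icc 0 1) := fun t _ => (hderiv t).continuousAt.continuousWithinAt
  have hP : Continuous fun t => γ (Int.fract t) := hγ.comp_fract'' hclosed
  have hdP : Continuous fun t => dγ (Int.fract t) := hC1.continuousOn.comp_fract'' hclosed'
  have hlift t (ht : t ∈ Icc (0 : ℝ) 1) := normalize_eq_exp_mul_I (hreg t ht) (hθ t ht)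
  have hθ₀₁ : exp (θ 1 * I) = exp (θ 0 * I) := by
    rw [← hlift 0 (left_mem_Icc.mpr zero_le_one), ← hlift 1 (right_mem_Icc.mpr zero_le_one),
      hclosed']
  -- Shifting the parameter of the periodic extension makes the curve start at a lowest point.
  obtain ⟨t₀, -, ht₀⟩ := isCompact_Icc.exists_isMinOn (nonempty_Icc.mpr zero_le_one)
    (continuous_im.comp hP).continuousOn
  have key := turning_tangents_of_forall_im_le (Γ := fun t => γ (Int.fract (t + t₀)))
    (dΓ := fun t => dγ (Int.fract (t + t₀))) (Θ := fun t => extendAngle θ (t + t₀))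
    (hdP.comp (continuous_add_const t₀))
    (fun s t => by
      rw [intervalIntegral.integral_comp_add_right (fun u => dγ (Int.fract u)),
        integral_comp_fract hγ hclosed (fun t _ => hderiv t) hdP])
    (by simp [add_comm]) (by simp [add_comm])
    (fun t _ => hreg _ (hfract _)) (hsimple.comp_fract_add t₀)
    ((continuous_extendAngle hθcont).comp (continuous_add_const t₀)).continuousOn
    (fun t _ => by
      rw [exp_extendAngle_mul_I hθ₀₁]
      exact (hlift _ (hfract _)).symm)
    (fun t _ => by simpa [Int.fract_fract] using ht₀ (hfract (t + t₀)))
  simpa [add_comm, extendAngle_add_one] using key
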